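/- arXiv:1605.04751 — 5 statements merged into one kernel-verified Lean document; each statement's English description precedes it below -/
import Mathlib

section
/- Fix n ≥ 1 and consider all ordered partitions of [n] = {1,…,n} and of [n+1] = {1,…,n+1}. Define a pairing: an ordered partition of [n] is paired with the ordered partition of [n+1] obtained by appending the singleton {n+1} at the end; an ordered partition of [n+1] in which {n+1} is a singleton block not in last position is paired with the partition obtained by merging {n+1} with the block immediately following it. Then every ordered partition of [n] and every ordered partition of [n+1] participates in exactly one pair, and in each pair one partition has exactly one more block than the other. -/
/-- An ordered partition of a finite set `S`: a list of pairwise disjoint nonempty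
blocks whose union is `S`. -/
def IsOrderedPartition (S : Finset ℕ) (l : List (Finset ℕ)) : Prop :=
  (∀ I ∈ l, I.Nonempty) ∧ l.Pairwise Disjoint ∧ l.foldr (· ∪ ·) ∅ = S

/-- The non-critical pairing (lower, higher) for a pair `(α, β)` with `β = α ∪ {v}`,
`A` the vertex set of `α`: rules 1/2 (append/delete the final singleton `{v}`) and
rules 3/4 (split `v` out leftward / merge the singleton `{v}` with the following block). -/
def NCPair (v : ℕ) (A : Finset ℕ) (p q : List (Finset ℕ)) : Prop :=
  (IsOrderedPartition A p ∧ q = p ++ [{v}]) ∨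
  (∃ l I r, v ∉ I ∧ I.Nonempty ∧ p = l ++ (insert v I :: r) ∧ q = l ++ ({v} :: I :: r))

/-- `p` is the label of a facet (codimension-one face) of the simplex with label `q`:
either merge two adjacent blocks, or delete the last block. -/
def LabelFacet (p q : List (Finset ℕ)) : Prop :=
  (∃ l I J r, q = l ++ (I :: J :: r) ∧ p = l ++ ((I ∪ J) :: r)) ∨ (∃ I, q = p ++ [I])

/-- A V-path `β₀, α₁, β₁, α₂, …, β_m, α_{m+1}` of a discrete vector field:
`upper i` is `β_i`, `lower i` is `α_{i+1}`; each `α_{i+1}` is a facet of `β_i`,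
each `(α_i, β_i)` (for `1 ≤ i ≤ m`) is a pair of the field, and `αᵢ ≠ αᵢ₊₁`. -/
structure VPath {σ : Type} (Facet : σ → σ → Prop) (Pair : σ → σ → Prop) where
  len : ℕ
  upper : ℕ → σ
  lower : ℕ → σ
  face_step : ∀ i ≤ len, Facet (lower i) (upper i)
  pair_step : ∀ i < len, Pair (lower i) (upper (i+1))
  lower_ne : ∀ i < len, lower i ≠ lower (i+1)

/-- The underlying sequence of simplexes of a V-path. -/
def pathList {σ : Type} {F P : σ → σ → Prop} (Γ : VPath F P) : List σ :=
  (List.range (Γ.len+1)).flatMap (fun i => [Γ.upper i, Γ.lower i])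

/-- The length of the greatest common suffix of two lists of blocks. -/
def gcs (p q : List (Finset ℕ)) : ℕ :=
  ((p.reverse.zip q.reverse).takeWhile (fun x => x.1 == x.2)).length

/-- The list `[n+1, n, …, 1]`. -/
def ordRev (n : ℕ) : List ℕ := (List.range (n+1)).map (fun i => n+1-i)

/-- The label `({n+1}, {n}, …, {1})` of the distinguished simplex `α'`. -/
def alphaPrime (n : ℕ) : List (Finset ℕ) := (ordRev n).map (fun a => ({a} : Finset ℕ))

/-- The critical pairing (lower, higher) relative to a chosen vertex order `o`
(so that `λ(α') = o.map singleton`): with `i` the length of the greatest common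
suffix with `λ(α')` and `x` the entry occupying the `(i+1)`-st block from the end
of `λ(α')`, pair by splitting `x` out leftward / merging the singleton `{x}` with
the following block. -/

lemma mem_foldr_union {x : ℕ} (l : List (Finset ℕ)) :
    x ∈ l.foldr (· ∪ ·) ∅ ↔ ∃ B ∈ l, x ∈ B := by
  induction l with
  | nil => simp
  | cons B t ih => simp [ih]

lemma foldr_union_append (l₁ l₂ : List (Finset ℕ)) :
    (l₁ ++ l₂).foldr (· ∪ ·) ∅ = l₁.foldr (· ∪ ·) ∅ ∪ l₂.foldr (· ∪ ·) ∅ := by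
  induction l₁ with
  | nil => simp
  | cons B t ih => simp [ih, Finset.union_assoc]

lemma pos_unique {v : ℕ} : ∀ (l₁ : List (Finset ℕ)) {B₁ r₁ l₂ B₂ r₂},
    (l₁ ++ B₁ :: r₁).Pairwise Disjoint →
    l₁ ++ B₁ :: r₁ = l₂ ++ B₂ :: r₂ → v ∈ B₁ → v ∈ B₂ →
    l₁ = l₂ ∧ B₁ = B₂ ∧ r₁ = r₂ := by
  intro l₁
  induction l₁ with
  | nil =>
    intro B₁ r₁ l₂ B₂ r₂ hd he h1 h2
    cases l₂ with
    | nil => simp_all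
    | cons C l₂' =>
      simp only [List.nil_append, List.cons_append, List.cons.injEq] at he
      obtain ⟨hBC, hr⟩ := he
      exfalso
      have hmem : B₂ ∈ r₁ := by rw [hr]; simp
      have hdisj := (List.pairwise_cons.mp hd).1 B₂ hmem
      exact (Finset.disjoint_left.mp hdisj h1) h2
  | cons C l₁' ih =>
    intro B₁ r₁ l₂ B₂ r₂ hd he h1 h2
    cases l₂ with
    | nil =>
      simp only [List.cons_append, List.nil_append, List.cons.injEq] at he
      obtain ⟨hBC, hr⟩ := he
      exfalso
      have hmem : B₁ ∈ l₁' ++ B₁ :: r₁ := by simp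
      have hdisj := (List.pairwise_cons.mp hd).1 B₁ hmem
      exact (Finset.disjoint_left.mp hdisj (hBC ▸ h2)) h1
    | cons D l₂' =>
      simp only [List.cons_append, List.cons.injEq] at he
      obtain ⟨hCD, hr⟩ := he
      obtain ⟨e1, e2, e3⟩ := ih (List.pairwise_cons.mp hd).2 hr h1 h2
      exact ⟨by rw [hCD, e1], e2, e3⟩

lemma icc_ne (n : ℕ) : Finset.Icc 1 n ≠ Finset.Icc 1 (n+1) := by
  intro h
  have h1 : n+1 ∈ Finset.Icc 1 (n+1) := by simp [Finset.mem_Icc]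
  rw [← h] at h1
  simp [Finset.mem_Icc] at h1

lemma erase_top (n : ℕ) (A : Finset ℕ) (h : A ∪ {n+1} = Finset.Icc 1 (n+1))
    (hv : n+1 ∉ A) : A = Finset.Icc 1 n := by
  ext x
  simp only [Finset.mem_Icc]
  constructor
  · intro hx
    have hx' : x ∈ Finset.Icc 1 (n+1) := h ▸ Finset.mem_union_left _ hx
    simp only [Finset.mem_Icc] at hx'
    have : x ≠ n+1 := fun e => hv (e ▸ hx)
    omega
  · intro hx
    have hx' : x ∈ A ∪ {n+1} := by rw [h]; simp only [Finset.mem_Icc]; omega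
    rcases Finset.mem_union.mp hx' with h' | h'
    · exact h'
    · simp only [Finset.mem_singleton] at h'; omega


def CritPair (o : List ℕ) (p q : List (Finset ℕ)) : Prop :=
  ∃ x l I r, (o.reverse)[gcs q (o.map (fun a => ({a} : Finset ℕ)))]? = some x ∧
    x ∉ I ∧ I.Nonempty ∧ p = l ++ (insert x I :: r) ∧ q = l ++ ({x} :: I :: r)

/-- Every ordered partition of `[n]` and every ordered partition of `[n+1]`
participates in exactly one pair of the non-critical pairing, and in each pair one
partition has exactly one more block than the other. -/
theorem ncpair_unique (n : ℕ) (hn : 1 ≤ n) :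
    (∀ p : List (Finset ℕ),
      IsOrderedPartition (Finset.Icc 1 n) p ∨ IsOrderedPartition (Finset.Icc 1 (n+1)) p →
      ∃! q : List (Finset ℕ),
        NCPair (n+1) (Finset.Icc 1 n) p q ∨ NCPair (n+1) (Finset.Icc 1 n) q p) ∧
    (∀ p q : List (Finset ℕ), NCPair (n+1) (Finset.Icc 1 n) p q →
      q.length = p.length + 1) := by
  constructor
  · rintro p (hp | hp)
    · -- p is an ordered partition of [1, n]; partner is p ++ [{n+1}]
      have hnot : (n+1) ∉ p.foldr (· ∪ ·) ∅ := by
        rw [hp.2.2]; simp [Finset.mem_Icc]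
      refine ⟨p ++ [{n+1}], Or.inl (Or.inl ⟨hp, rfl⟩), ?_⟩
      rintro q' (h | h)
      · rcases h with ⟨-, rfl⟩ | ⟨l, I, r, hvI, hI, hpeq, rfl⟩
        · rfl
        · exact absurd ((mem_foldr_union p).mpr
            ⟨insert (n+1) I, by rw [hpeq]; simp, Finset.mem_insert_self _ _⟩) hnot
      · rcases h with ⟨hq', hpq⟩ | ⟨l, I, r, hvI, hI, hq', hpq⟩
        · exact absurd ((mem_foldr_union p).mpr
            ⟨{n+1}, by rw [hpq]; simp, Finset.mem_singleton_self _⟩) hnot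
        · exact absurd ((mem_foldr_union p).mpr
            ⟨{n+1}, by rw [hpq]; simp, Finset.mem_singleton_self _⟩) hnot
    · -- p is an ordered partition of [1, n+1]
      have hv : (n+1) ∈ p.foldr (· ∪ ·) ∅ := by
        rw [hp.2.2]; simp [Finset.mem_Icc]
      obtain ⟨B, hBp, hvB⟩ := (mem_foldr_union p).mp hv
      obtain ⟨l, r, hpe⟩ := List.append_of_mem hBp
      have hd : (l ++ B :: r).Pairwise Disjoint := hpe ▸ hp.2.1
      have hnotn : ¬ IsOrderedPartition (Finset.Icc 1 n) p := by
        intro h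
        exact icc_ne n (h.2.2.symm.trans hp.2.2)
      by_cases hB : B = {n+1}
      · subst hB
        cases r with
        | nil =>
          -- p = l ++ [{n+1}], partner is l
          have hfl : l.foldr (· ∪ ·) ∅ ∪ {n+1} = Finset.Icc 1 (n+1) := by
            have := hp.2.2
            rw [hpe, foldr_union_append] at this
            simpa using this
          have hvl : (n+1) ∉ l.foldr (· ∪ ·) ∅ := by
            intro hmem
            obtain ⟨C, hCl, hvC⟩ := (mem_foldr_union l).mp hmem
            have hdisj := ((List.pairwise_append.mp hd).2.2 C hCl {n+1} (by simp))
            exact (Finset.disjoint_left.mp hdisj hvC) (Finset.mem_singleton_self _)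
          have hlpart : IsOrderedPartition (Finset.Icc 1 n) l :=
            ⟨fun I hI => hp.1 I (by rw [hpe]; exact List.mem_append_left _ hI),
             (List.pairwise_append.mp hd).1, erase_top n _ hfl hvl⟩
          refine ⟨l, Or.inr (Or.inl ⟨hlpart, hpe⟩), ?_⟩
          rintro q' (h | h)
          · rcases h with ⟨h', -⟩ | ⟨l', I', r', hvI', hI', hpeq, rfl⟩
            · exact absurd h' hnotn
            · obtain ⟨-, e2, -⟩ := pos_unique l hd (hpe.symm.trans hpeq) hvB
                (Finset.mem_insert_self _ _)
              exfalso
              obtain ⟨x, hx⟩ := hI'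
              have : x ∈ insert (n+1) I' := Finset.mem_insert_of_mem hx
              rw [← e2] at this
              simp only [Finset.mem_singleton] at this
              exact hvI' (this ▸ hx)
          · rcases h with ⟨hq', hpq⟩ | ⟨l', I', r', hvI', hI', hq', hpq⟩
            · obtain ⟨e1, -, -⟩ := pos_unique l hd
                (hpe.symm.trans hpq) hvB (Finset.mem_singleton_self _)
              exact e1.symm
            · obtain ⟨-, -, e3⟩ := pos_unique l hd
                (hpe.symm.trans hpq) hvB (Finset.mem_singleton_self _)
              exact absurd e3 (by simp)
        | cons J r' =>
          -- p = l ++ {n+1} :: J :: r', partner merges {n+1} into J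
          have hvJ : (n+1) ∉ J := by
            have hdisj := (List.pairwise_cons.mp (List.pairwise_append.mp hd).2.1).1 J
              (by simp)
            exact Finset.disjoint_singleton_left.mp hdisj
          have hJ : J.Nonempty := hp.1 J (by rw [hpe]; simp)
          refine ⟨l ++ insert (n+1) J :: r',
            Or.inr (Or.inr ⟨l, J, r', hvJ, hJ, rfl, hpe⟩), ?_⟩
          rintro q' (h | h)
          · rcases h with ⟨h', -⟩ | ⟨l', I', r'', hvI', hI', hpeq, rfl⟩
            · exact absurd h' hnotn
            · obtain ⟨-, e2, -⟩ := pos_unique l hd (hpe.symm.trans hpeq) hvB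
                (Finset.mem_insert_self _ _)
              exfalso
              obtain ⟨x, hx⟩ := hI'
              have : x ∈ insert (n+1) I' := Finset.mem_insert_of_mem hx
              rw [← e2] at this
              simp only [Finset.mem_singleton] at this
              exact hvI' (this ▸ hx)
          · rcases h with ⟨hq', hpq⟩ | ⟨l', I', r'', hvI', hI', hq', hpq⟩
            · obtain ⟨-, -, e3⟩ := pos_unique l hd
                (hpe.symm.trans hpq) hvB (Finset.mem_singleton_self _)
              exact absurd e3 (by simp)
            · obtain ⟨e1, -, e3⟩ := pos_unique l hd
                (hpe.symm.trans hpq) hvB (Finset.mem_singleton_self _)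
              obtain ⟨e4, e5⟩ := List.cons.injEq _ _ _ _ ▸ e3
              rw [hq', ← e1, ← e4, ← e5]
      · -- the block B containing n+1 is not the singleton; split n+1 out
        have hIne : (B.erase (n+1)).Nonempty := by
          rw [Finset.nonempty_iff_ne_empty]
          intro h
          apply hB
          refine Finset.eq_singleton_iff_unique_mem.mpr ⟨hvB, fun x hx => ?_⟩
          by_contra hxv
          have : x ∈ B.erase (n+1) := Finset.mem_erase.mpr ⟨hxv, hx⟩
          simp [h] at this
        have hins : insert (n+1) (B.erase (n+1)) = B := Finset.insert_erase hvB
        refine ⟨l ++ ({n+1} :: B.erase (n+1) :: r),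
          Or.inl (Or.inr ⟨l, B.erase (n+1), r, Finset.notMem_erase _ _, hIne,
            by rw [hpe, hins], rfl⟩), ?_⟩
        rintro q' (h | h)
        · rcases h with ⟨h', -⟩ | ⟨l', I', r', hvI', hI', hpeq, rfl⟩
          · exact absurd h' hnotn
          · obtain ⟨e1, e2, e3⟩ := pos_unique l hd (hpe.symm.trans hpeq) hvB
              (Finset.mem_insert_self _ _)
            have hI'e : I' = B.erase (n+1) := by
              rw [e2, Finset.erase_insert hvI']
            rw [← e1, hI'e, ← e3]
        · rcases h with ⟨hq', hpq⟩ | ⟨l', I', r'', hvI', hI', hq', hpq⟩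
          · obtain ⟨-, e2, -⟩ := pos_unique l hd
              (hpe.symm.trans hpq) hvB (Finset.mem_singleton_self _)
            exact absurd e2 hB
          · obtain ⟨-, e2, -⟩ := pos_unique l hd
              (hpe.symm.trans hpq) hvB (Finset.mem_singleton_self _)
            exact absurd e2 hB
  · rintro p q (⟨-, rfl⟩ | ⟨l, I, r, -, -, rfl, rfl⟩)
    · simp
    · simp [List.length_append]; omega
end

section
/- The discrete vector field defined on the barycentric subdivision of a pair (α^{n-1}, β^n) by the four pairing rules on ordered partitions containing the entry n+1 has no closed V-paths: in any V-path, the position of the entry n+1 in the labels strictly moves left, hence no path returns to its initial simplex. -/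
/-- Measure: twice the index of the first block containing `v`, plus 1 if that
block is not the singleton `{v}` (and `2·length + 1` if `v` is absent). -/
def fmes (v : ℕ) : List (Finset ℕ) → ℕ
  | [] => 1
  | I :: t => if v ∈ I then (if I = {v} then 0 else 1) else 2 + fmes v t

lemma fmes_append (v : ℕ) (l t : List (Finset ℕ)) (h : ∀ J ∈ l, v ∉ J) :
    fmes v (l ++ t) = 2 * l.length + fmes v t := by
  induction l with
  | nil => simp
  | cons a l ih =>
    simp only [List.cons_append, fmes, if_neg (h a (by simp)), List.length_cons,
      List.append_eq]
    have ih' := ih (fun J hJ => h J (by simp [hJ]))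
    omega

lemma fmes_cons_sing (v : ℕ) (t : List (Finset ℕ)) : fmes v ({v} :: t) = 0 := by
  simp [fmes]

lemma fmes_cons_big (v : ℕ) (I : Finset ℕ) (t : List (Finset ℕ)) (hv : v ∈ I)
    (hI : I ≠ {v}) : fmes v (I :: t) = 1 := by
  simp [fmes, hv, hI]

lemma big_ne (v : ℕ) (X : Finset ℕ) (hne : X.Nonempty) (hv : v ∉ X) (Y : Finset ℕ) :
    X ∪ Y ≠ {v} := by
  obtain ⟨a, ha⟩ := hne
  intro h
  have hau : a ∈ X ∪ Y := Finset.mem_union_left _ ha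
  rw [h, Finset.mem_singleton] at hau
  exact hv (hau ▸ ha)

lemma insert_ne_sing (v : ℕ) (I : Finset ℕ) (hv : v ∉ I) (hne : I.Nonempty) :
    insert v I ≠ {v} := by
  obtain ⟨a, ha⟩ := hne
  intro h
  have : a ∈ insert v I := Finset.mem_insert_of_mem ha
  rw [h, Finset.mem_singleton] at this
  exact hv (this ▸ ha)

lemma mem_subset_foldr (J : Finset ℕ) (l : List (Finset ℕ)) (h : J ∈ l) :
    J ⊆ l.foldr (· ∪ ·) ∅ := by
  induction l with
  | nil => simp at h
  | cons a l ih =>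
    rcases List.mem_cons.1 h with h | h
    · subst h; exact Finset.subset_union_left
    · exact (ih h).trans Finset.subset_union_right

lemma not_mem_of_pairwise (v : ℕ) (l : List (Finset ℕ)) (B : Finset ℕ)
    (r : List (Finset ℕ)) (hd : (l ++ B :: r).Pairwise Disjoint) (hv : v ∈ B) :
    (∀ J ∈ l, v ∉ J) ∧ (∀ J ∈ r, v ∉ J) := by
  rw [List.pairwise_append] at hd
  obtain ⟨h1, h2, h3⟩ := hd
  rw [List.pairwise_cons] at h2
  constructor
  · intro J hJ hvJ
    exact Finset.disjoint_left.1 (h3 J hJ B (by simp)) hvJ hv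
  · intro J hJ hvJ
    exact Finset.disjoint_left.1 (h2.1 J hJ) hv hvJ

lemma key (v : ℕ) (A : Finset ℕ) (hvA : v ∉ A) (p p' q : List (Finset ℕ))
    (hne : ∀ I ∈ p, I.Nonempty) (hdisj : p.Pairwise Disjoint)
    (hpair : NCPair v A p q) (hfac : LabelFacet p' q) (hpp' : p ≠ p') :
    fmes v p' < fmes v p := by
  rcases hpair with ⟨hop, hq⟩ | ⟨l, I, r, hvI, hInem, hp, hq⟩
  · -- rule 1/2 case: `v` absent from `p`, `q = p ++ [{v}]`
    have hvp : ∀ J ∈ p, v ∉ J := by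
      intro J hJ hvJ
      exact hvA (hop.2.2 ▸ mem_subset_foldr J p hJ hvJ)
    have hfp : fmes v p = 2 * p.length + 1 := by
      have := fmes_append v p [] hvp
      simpa [fmes] using this
    rcases hfac with ⟨l₂, X, Y, r₂, hq₂, hp'⟩ | ⟨X, hqX⟩
    · rw [hq] at hq₂
      rcases List.append_eq_append_iff.1 hq₂ with ⟨a', hl₂, ha'⟩ | ⟨c', hpc, hc'⟩
      · -- [{v}] = a' ++ X :: Y :: r₂ : impossible by lengths
        have := congrArg List.length ha'
        simp at this
        omega
      · cases c' with
        | nil =>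
          simp at hc'
        | cons X' c₂ =>
          obtain ⟨hX', hc₂⟩ := List.cons_eq_cons.1 hc'
          subst hX'
          cases c₂ with
          | nil =>
            simp at hc₂
            obtain ⟨hY, hr₂⟩ := hc₂
            subst hY; subst hr₂
            subst hpc
            have hXp : X ∈ l₂ ++ [X] := by simp
            have hX1 : X.Nonempty := hne X hXp
            have hX2 : v ∉ X := hvp X hXp
            have hf' : fmes v p' = 2 * l₂.length + 1 := by
              rw [hp', fmes_append v l₂ _ (fun J hJ => hvp J (by simp [hJ])),
                fmes_cons_big v _ _ (Finset.mem_union_right _ (by simp))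
                  (big_ne v X hX1 hX2 {v})]
            have hlp : (l₂ ++ [X]).length = l₂.length + 1 := by simp
            omega
          | cons Y' c₃ =>
            obtain ⟨hY', hc₃⟩ := List.cons_eq_cons.1 hc₂
            subst hY'
            subst hpc
            -- r₂ = c₃ ++ [{v}]
            have hr₂ : r₂ = c₃ ++ [{v}] := hc₃
            subst hr₂
            have hsub : p' = (l₂ ++ (X ∪ Y) :: c₃) ++ [{v}] := by
              rw [hp']; simp
            have hvl : ∀ J ∈ l₂ ++ (X ∪ Y) :: c₃, v ∉ J := by
              intro J hJ
              simp only [List.mem_append, List.mem_cons] at hJ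
              rcases hJ with hJ | hJ | hJ
              · exact hvp J (by simp [hJ])
              · subst hJ
                intro hvJ
                rcases Finset.mem_union.1 hvJ with h | h
                · exact hvp X (by simp) h
                · exact hvp Y (by simp) h
              · exact hvp J (by simp [hJ])
            have hf' : fmes v p' = 2 * (l₂.length + 1 + c₃.length) := by
              rw [hsub, fmes_append v _ _ hvl]
              simp [fmes_cons_sing]
              omega
            have hlp : (l₂ ++ X :: Y :: c₃).length = l₂.length + 2 + c₃.length := by
              simp
              omega
            omega
    · -- delete-last: p' = p, contradiction
      rw [hq] at hqX
      have hlen : p'.length = p.length := by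
        have := congrArg List.length hqX
        simp at this
        omega
      obtain ⟨h1, _⟩ := List.append_inj hqX.symm (by omega)
      exact absurd h1.symm hpp'
  · -- rule 3/4 case: p = l ++ insert v I :: r, q = l ++ {v} :: I :: r
    have hmem : v ∈ insert v I := Finset.mem_insert_self v I
    obtain ⟨hvl, hvr⟩ := not_mem_of_pairwise v l (insert v I) r (hp ▸ hdisj) hmem
    have hfp : fmes v p = 2 * l.length + 1 := by
      rw [hp, fmes_append v l _ hvl,
        fmes_cons_big v _ _ hmem (insert_ne_sing v I hvI hInem)]
    rcases hfac with ⟨l₂, X, Y, r₂, hq₂, hp'⟩ | ⟨X, hqX⟩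
    · rw [hq] at hq₂
      rcases List.append_eq_append_iff.1 hq₂ with ⟨a', hl₂, ha'⟩ | ⟨c', hlc, hc'⟩
      · cases a' with
        | nil =>
          simp at hl₂ ha'
          obtain ⟨hX, hY, hr₂⟩ := ha'
          subst hX; subst hY; subst hr₂; subst hl₂
          have : p' = p := by
            rw [hp', hp, Finset.insert_eq]
          exact absurd this.symm hpp'
        | cons a₀ a'' =>
          obtain ⟨ha₀, ha''⟩ := List.cons_eq_cons.1 ha'
          subst ha₀
          have hsub : p' = l ++ {v} :: (a'' ++ (X ∪ Y) :: r₂) := by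
            rw [hp', hl₂]; simp
          have hf' : fmes v p' = 2 * l.length := by
            rw [hsub, fmes_append v l _ hvl, fmes_cons_sing]
            omega
          omega
      · cases c' with
        | nil =>
          simp at hlc hc'
          obtain ⟨hX, hY, hr₂⟩ := hc'
          subst hX; subst hY; subst hr₂
          have : p' = p := by
            rw [hp', hp, Finset.insert_eq, hlc]
          exact absurd this.symm hpp'
        | cons X' c₂ =>
          obtain ⟨hX', hc₂⟩ := List.cons_eq_cons.1 hc'
          subst hX'
          cases c₂ with
          | nil =>
            simp at hc₂
            obtain ⟨hY, hr₂⟩ := hc₂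
            subst hY; subst hr₂
            have hXp : X ∈ p := by rw [hp, hlc]; simp
            have hX1 : X.Nonempty := hne X hXp
            have hX2 : v ∉ X := hvl X (by rw [hlc]; simp)
            have hvl₂ : ∀ J ∈ l₂, v ∉ J := fun J hJ => hvl J (by rw [hlc]; simp [hJ])
            have hf' : fmes v p' = 2 * l₂.length + 1 := by
              rw [hp', fmes_append v l₂ _ hvl₂,
                fmes_cons_big v _ _ (Finset.mem_union_right _ (by simp))
                  (big_ne v X hX1 hX2 {v})]
            have hll : l.length = l₂.length + 1 := by rw [hlc]; simp
            omega
          | cons Y' c₃ =>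
            obtain ⟨hY', hc₃⟩ := List.cons_eq_cons.1 hc₂
            subst hY'
            -- r₂ = c₃ ++ {v} :: I :: r, l = l₂ ++ X :: Y :: c₃
            have hr₂ : r₂ = c₃ ++ {v} :: I :: r := hc₃
            subst hr₂
            have hsub : p' = (l₂ ++ (X ∪ Y) :: c₃) ++ {v} :: I :: r := by
              rw [hp']; simp
            have hvl' : ∀ J ∈ l₂ ++ (X ∪ Y) :: c₃, v ∉ J := by
              intro J hJ
              simp only [List.mem_append, List.mem_cons] at hJ
              rcases hJ with hJ | hJ | hJ
              · exact hvl J (by rw [hlc]; simp [hJ])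
              · subst hJ
                intro hvJ
                rcases Finset.mem_union.1 hvJ with h | h
                · exact hvl X (by rw [hlc]; simp) h
                · exact hvl Y (by rw [hlc]; simp) h
              · exact hvl J (by rw [hlc]; simp [hJ])
            have hf' : fmes v p' = 2 * (l₂.length + 1 + c₃.length) := by
              rw [hsub, fmes_append v _ _ hvl', fmes_cons_sing]
              simp
              omega
            have hll : l.length = l₂.length + 2 + c₃.length := by rw [hlc]; simp; omega
            omega
    · -- delete-last
      have hp'q : p' = q.dropLast := by
        rw [hqX]; simp
      have hdl : q.dropLast = l ++ {v} :: (I :: r).dropLast := by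
        rw [hq]
        rw [List.dropLast_append_of_ne_nil (List.cons_ne_nil _ _)]
        rfl
      have hf' : fmes v p' = 2 * l.length := by
        rw [hp'q, hdl, fmes_append v l _ hvl, fmes_cons_sing]
        omega
      omega

/-- The discrete vector field given by the four non-critical pairing rules on the
barycentric subdivision of a pair `(α, β)`, `α = [n]`, `β = [n+1]`, has no closed
V-paths. -/
theorem ncpair_no_closed_path (n : ℕ) (hn : 1 ≤ n) :
    ¬ ∃ P : VPath LabelFacet (NCPair (n+1) (Finset.Icc 1 n)),
      (∀ i ≤ P.len, (∃ S ⊆ Finset.Icc 1 (n+1), IsOrderedPartition S (P.upper i)) ∧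
        (∃ S ⊆ Finset.Icc 1 (n+1), IsOrderedPartition S (P.lower i))) ∧
      0 < P.len ∧ P.lower P.len = P.lower 0 := by
  rintro ⟨P, hparts, hlen, hclose⟩
  have hvA : n + 1 ∉ Finset.Icc 1 n := by
    intro h
    rw [Finset.mem_Icc] at h
    omega
  have step : ∀ i < P.len, fmes (n+1) (P.lower (i+1)) < fmes (n+1) (P.lower i) := by
    intro i hi
    obtain ⟨S, hS, hop⟩ := (hparts i (le_of_lt hi)).2
    exact key (n+1) _ hvA _ _ _ hop.1 hop.2.1
      (P.pair_step i hi) (P.face_step (i+1) (by omega)) (P.lower_ne i hi)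
  have mono : ∀ i ≤ P.len, fmes (n+1) (P.lower i) + i ≤ fmes (n+1) (P.lower 0) := by
    intro i
    induction i with
    | zero => simp
    | succ k ih =>
      intro h
      have h1 := step k (by omega)
      have h2 := ih (by omega)
      omega
  have := mono P.len le_rfl
  rw [hclose] at this
  omega
end

section
/- Let γ be an n-simplex inside Δ(β) where β = [n+1], so λ(γ) = (I₁,…,I_{n+1}) with all blocks singletons. Then γ has exactly one (n−1)-face lying on the boundary of β, namely the simplex with label (I₁,…,I_n), and γ is paired with this face if and only if I_{n+1} = {n+1}. -/
lemma foldrU_append (a b : List (Finset ℕ)) :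
    (a ++ b).foldr (· ∪ ·) ∅ = a.foldr (· ∪ ·) ∅ ∪ b.foldr (· ∪ ·) ∅ := by
  induction a with
  | nil => simp
  | cons x xs ih => simp [ih, Finset.union_assoc]

lemma mem_foldrU {x : ℕ} {l : List (Finset ℕ)} :
    x ∈ l.foldr (· ∪ ·) ∅ ↔ ∃ I ∈ l, x ∈ I := by
  induction l with
  | nil => simp
  | cons y ys ih => simp [ih, Finset.mem_union]

/-- Let `γ` be an `n`-simplex interior to `β = [n+1]`, with label a sequence of
`n+1` singletons `(I₁, …, I_{n+1})`. Then `γ` has exactly one facet lying on the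
boundary of `β`, namely the one with label `(I₁, …, I_n)`, and `γ` is paired with
this facet iff `I_{n+1} = {n+1}`. -/
theorem boundary_facet_unique (n : ℕ) (hn : 1 ≤ n) (l : List (Finset ℕ))
    (hpart : IsOrderedPartition (Finset.Icc 1 (n+1)) l)
    (hlen : l.length = n + 1) (hsing : ∀ I ∈ l, I.card = 1) :
    (∀ p : List (Finset ℕ),
      (LabelFacet p l ∧ p.foldr (· ∪ ·) ∅ ≠ Finset.Icc 1 (n+1)) ↔ p = l.dropLast) ∧
    (NCPair (n+1) (Finset.Icc 1 n) l.dropLast l ↔ l.getLast? = some {n+1}) := by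
  obtain ⟨hne, hdisj, hunion⟩ := hpart
  have hlnil : l ≠ [] := by
    intro h; rw [h] at hlen; simp at hlen
  set J := l.getLast hlnil with hJ
  have hsplit : l = l.dropLast ++ [J] := (l.dropLast_append_getLast hlnil).symm
  -- disjointness of J from every block of dropLast
  have hdisj' : ∀ a ∈ l.dropLast, Disjoint a J := by
    have := hdisj
    rw [hsplit] at this
    rw [List.pairwise_append] at this
    intro a ha
    exact this.2.2 a ha J (by simp)
  -- any element of J is not in the union of dropLast
  have hnotin : ∀ x ∈ J, x ∉ l.dropLast.foldr (· ∪ ·) ∅ := by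
    intro x hx hmem
    obtain ⟨K, hK, hxK⟩ := mem_foldrU.mp hmem
    exact Finset.disjoint_left.mp (hdisj' K hK) hxK hx
  have hJne : J.Nonempty := hne J (by rw [hsplit]; simp)
  obtain ⟨x0, hx0⟩ := hJne
  have hUdrop_ne : l.dropLast.foldr (· ∪ ·) ∅ ≠ Finset.Icc 1 (n+1) := by
    intro h
    have hx0mem : x0 ∈ Finset.Icc 1 (n+1) := by
      rw [← hunion, hsplit, foldrU_append]
      simp [hx0]
    exact hnotin x0 hx0 (h ▸ hx0mem)
  constructor
  · intro p
    constructor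
    · rintro ⟨hfac, hUne⟩
      rcases hfac with ⟨ll, I, K, r, hq, hp⟩ | ⟨I, hq⟩
      · exfalso
        apply hUne
        rw [← hunion, hq, hp, foldrU_append, foldrU_append]
        simp [Finset.union_assoc]
      · rw [hq]; simp
    · rintro rfl
      refine ⟨Or.inr ⟨J, hsplit⟩, hUdrop_ne⟩
  · constructor
    · rintro (⟨_, hq⟩ | ⟨ll, I, r, hv, hIne, hp, hq⟩)
      · rw [hq]; simp
      · exfalso
        have hmem : insert (n+1) I ∈ l := by
          exact l.dropLast_sublist.mem (by rw [hp]; simp)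
        have hcard := hsing _ hmem
        rw [Finset.card_insert_of_notMem hv] at hcard
        have := Finset.card_pos.mpr hIne
        omega
    · intro hlast
      have hJeq : J = {n+1} := by
        rw [hJ, ← Option.some_inj, ← List.getLast?_eq_getLast hlnil, hlast]
      left
      refine ⟨⟨?_, ?_, ?_⟩, by rw [← hJeq]; exact hsplit⟩
      · intro I hI
        exact hne I (l.dropLast_sublist.mem hI)
      · exact hdisj.sublist l.dropLast_sublist
      · -- union of dropLast is Icc 1 n
        have hU : l.dropLast.foldr (· ∪ ·) ∅ ∪ {n+1} = Finset.Icc 1 (n+1) := by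
          rw [← hunion]
          conv_rhs => rw [hsplit]
          rw [foldrU_append, hJeq]
          simp
        have hnn : (n+1) ∉ l.dropLast.foldr (· ∪ ·) ∅ :=
          hnotin (n+1) (by simp [hJeq]) 
        ext x
        simp only [Finset.mem_Icc]
        constructor
        · intro hx
          have hx1 : x ∈ Finset.Icc 1 (n+1) := by
            rw [← hU]; exact Finset.mem_union_left _ hx
          have hxne : x ≠ n + 1 := fun h => hnn (h ▸ hx)
          simp only [Finset.mem_Icc] at hx1
          omega
        · intro hx
          have hx1 : x ∈ Finset.Icc 1 (n+1) := by
            simp only [Finset.mem_Icc]; omega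
          rw [← hU] at hx1
          rcases Finset.mem_union.mp hx1 with h | h
          · exact h
          · simp at h; omega
end

section
/- Let α = [n+1] be a critical simplex, α' the n-simplex with label ({n+1},{n},…,{1}), and define for every simplex γ of Δ(α) with γ ≠ α' a pairing as follows: let i be the length of the greatest common suffix of λ(γ) and λ(α'); if the entry i+1 forms a singleton in λ(γ), pair γ with the simplex obtained by merging this singleton with the following block; otherwise pair γ with the simplex obtained by splitting i+1 out as a singleton to the left of its block. Then this pairing is a well-defined involution on the simplexes of Δ(α) other than α', pairing simplexes of adjacent dimensions with the facet relation, and both pairing operations preserve the greatest common suffix with λ(α'). -/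
namespace CP

lemma tw_mem {α} (pred : α → Bool) : ∀ (l : List α) (j : ℕ), j < (l.takeWhile pred).length →
    ∃ a, l[j]? = some a ∧ pred a = true := by
  intro l
  induction l with
  | nil => simp
  | cons b t ih =>
    intro j hj
    rw [List.takeWhile_cons] at hj
    by_cases hb : pred b
    · simp [hb] at hj
      cases j with
      | zero => exact ⟨b, by simp, hb⟩
      | succ j => simpa using ih j (by omega)
    · simp [hb] at hj

lemma tw_stop {α} (pred : α → Bool) : ∀ (l : List α) (a : α),
    l[(l.takeWhile pred).length]? = some a → pred a = false := by
  intro l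
  induction l with
  | nil => simp
  | cons b t ih =>
    intro a ha
    rw [List.takeWhile_cons] at ha
    by_cases hb : pred b
    · simp [hb] at ha
      exact ih a ha
    · simp [hb] at ha
      subst ha
      simpa using hb

lemma tw_len {α} (pred : α → Bool) : ∀ (l : List α) (k : ℕ),
    (∀ j < k, ∃ a, l[j]? = some a ∧ pred a = true) →
    (∀ a, l[k]? = some a → pred a = false) →
    (l.takeWhile pred).length = k := by
  intro l
  induction l with
  | nil =>
    intro k h1 _
    cases k with
    | zero => simp
    | succ k => obtain ⟨a, ha, -⟩ := h1 0 (by omega); simp at ha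
  | cons b t ih =>
    intro k h1 h2
    rw [List.takeWhile_cons]
    cases k with
    | zero =>
      have := h2 b (by simp)
      simp [this]
    | succ k =>
      obtain ⟨a, ha, hpa⟩ := h1 0 (by omega)
      simp at ha; subst ha
      simp [hpa]
      exact ih k (fun j hj => by simpa using h1 (j+1) (by omega)) (fun a ha => h2 a (by simpa using ha))

def Agree (p q : List (Finset ℕ)) (j : ℕ) : Prop :=
  ∃ a, p.reverse[j]? = some a ∧ q.reverse[j]? = some a

lemma gcs_agree {p q : List (Finset ℕ)} {j : ℕ} (hj : j < gcs p q) : Agree p q j := by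
  obtain ⟨z, hz, hpz⟩ := tw_mem _ _ j hj
  rw [List.getElem?_zip_eq_some] at hz
  simp only [beq_iff_eq] at hpz
  exact ⟨z.1, hz.1, by rw [hpz]; exact hz.2⟩

lemma gcs_not_agree (p q : List (Finset ℕ)) : ¬ Agree p q (gcs p q) := by
  rintro ⟨a, h1, h2⟩
  have : (p.reverse.zip q.reverse)[gcs p q]? = some (a, a) :=
    List.getElem?_zip_eq_some.2 ⟨h1, h2⟩
  have := tw_stop _ _ _ this
  simp at this

lemma gcs_eq {p q : List (Finset ℕ)} {k : ℕ}
    (h1 : ∀ j < k, Agree p q j) (h2 : ¬ Agree p q k) : gcs p q = k := by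
  apply tw_len
  · intro j hj
    obtain ⟨a, ha1, ha2⟩ := h1 j hj
    exact ⟨(a, a), List.getElem?_zip_eq_some.2 ⟨ha1, ha2⟩, by simp⟩
  · intro z hz
    rw [List.getElem?_zip_eq_some] at hz
    by_contra hb
    simp only [Bool.not_eq_false, beq_iff_eq] at hb
    exact h2 ⟨z.1, hz.1, hb ▸ hz.2⟩


lemma app_get_lt {α} (s t : List α) {j : ℕ} (h : j < s.length) : (s ++ t)[j]? = s[j]? := by
  simp [List.getElem?_append, h]

lemma app_get_ge {α} (s t : List α) {j : ℕ} (h : s.length ≤ j) : (s ++ t)[j]? = t[j - s.length]? := by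
  rw [List.getElem?_append]
  simp [Nat.not_lt.2 h]

lemma ordRev_len (n : ℕ) : (ordRev n).length = n+1 := by simp [ordRev]

lemma ordRev_reverse (n : ℕ) : (ordRev n).reverse = (List.range (n+1)).map (fun i => i+1) := by
  apply List.ext_getElem?
  intro j
  by_cases hj : j < n+1
  · rw [List.getElem?_reverse (by simpa [ordRev_len] using hj)]
    rw [ordRev_len]
    simp only [ordRev, List.getElem?_map, List.getElem?_range (show n+1-1-j < n+1 by omega),
      List.getElem?_range hj, Option.map_some]
    congr 1
    omega
  · rw [List.getElem?_eq_none (by simpa [ordRev_len] using Nat.not_lt.1 hj),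
      List.getElem?_eq_none (by simpa using Nat.not_lt.1 hj)]

lemma alpha_len (n : ℕ) : (alphaPrime n).length = n+1 := by simp [alphaPrime, ordRev]

lemma alpha_rev (n : ℕ) :
    (alphaPrime n).reverse = (List.range (n+1)).map (fun i => ({i+1} : Finset ℕ)) := by
  rw [alphaPrime, ← List.map_reverse, ordRev_reverse, List.map_map]
  rfl

lemma alpha_rev_get {n j : ℕ} (hj : j ≤ n) : (alphaPrime n).reverse[j]? = some {j+1} := by
  rw [alpha_rev]
  simp [List.getElem?_range (show j < n+1 by omega)]

lemma alpha_rev_get_none {n j : ℕ} (hj : n < j) : (alphaPrime n).reverse[j]? = none := by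
  apply List.getElem?_eq_none
  simp [alpha_len]
  omega

lemma oRev_get {n j : ℕ} (hj : j ≤ n) : (ordRev n).reverse[j]? = some (j+1) := by
  rw [ordRev_reverse]
  simp [List.getElem?_range (show j < n+1 by omega)]

lemma oRev_get_none {n j : ℕ} (hj : n < j) : (ordRev n).reverse[j]? = none := by
  apply List.getElem?_eq_none
  simp [ordRev_len]
  omega

lemma mem_foldr {l : List (Finset ℕ)} {a : ℕ} :
    a ∈ l.foldr (· ∪ ·) ∅ ↔ ∃ B ∈ l, a ∈ B := by
  induction l with
  | nil => simp
  | cons b t ih => simp [Finset.mem_union, ih]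

lemma part_decomp_unique {p l₁ r₁ l₂ r₂ : List (Finset ℕ)} {B₁ B₂ : Finset ℕ} {x : ℕ}
    (hp : p.Pairwise Disjoint)
    (h1 : p = l₁ ++ B₁ :: r₁) (h2 : p = l₂ ++ B₂ :: r₂) (hx1 : x ∈ B₁) (hx2 : x ∈ B₂) :
    l₁ = l₂ ∧ B₁ = B₂ ∧ r₁ = r₂ := by
  have g1 : p[l₁.length]? = some B₁ := by
    rw [h1, app_get_ge _ _ (le_refl _)]; simp
  have g2 : p[l₂.length]? = some B₂ := by
    rw [h2, app_get_ge _ _ (le_refl _)]; simp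
  have hlen : l₁.length = l₂.length := by
    by_contra hne
    obtain ⟨hl1, ge1⟩ := List.getElem?_eq_some_iff.1 g1
    obtain ⟨hl2, ge2⟩ := List.getElem?_eq_some_iff.1 g2
    rcases Nat.lt_or_ge l₁.length l₂.length with h | h
    · have := List.pairwise_iff_getElem.1 hp _ _ hl1 hl2 h
      rw [ge1, ge2] at this
      exact (Finset.disjoint_left.1 this hx1) hx2
    · have h' : l₂.length < l₁.length := by omega
      have := List.pairwise_iff_getElem.1 hp _ _ hl2 hl1 h'
      rw [ge1, ge2] at this
      exact (Finset.disjoint_left.1 this hx2) hx1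
  have hl : l₁ = l₂ := by
    have : l₁ = p.take l₁.length := by rw [h1, List.take_left]
    rw [hlen, h2, List.take_left] at this
    exact this
  subst hl
  have := h1.symm.trans h2
  have := List.append_cancel_left this
  simp at this
  exact ⟨rfl, this.1, this.2⟩

lemma rev_decomp {l r : List (Finset ℕ)} {b : Finset ℕ} :
    (l ++ b :: r).reverse = r.reverse ++ b :: l.reverse := by
  simp

lemma rev_get_low {l r : List (Finset ℕ)} {b : Finset ℕ} {j : ℕ} (hj : j < r.length) :
    (l ++ b :: r).reverse[j]? = r.reverse[j]? := by
  rw [rev_decomp, app_get_lt]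
  simpa using hj

lemma rev_get_mid {l r : List (Finset ℕ)} {b : Finset ℕ} :
    (l ++ b :: r).reverse[r.length]? = some b := by
  rw [rev_decomp, app_get_ge _ _ (by simp)]
  simp

lemma rev_get_mid2 {l r : List (Finset ℕ)} {b c : Finset ℕ} :
    (l ++ b :: c :: r).reverse[r.length + 1]? = some b := by
  have : l ++ b :: c :: r = (l ++ [b]) ++ c :: r := by simp
  rw [this, rev_decomp, app_get_ge _ _ (by simp)]
  simp


lemma ordRev_map (n : ℕ) : (ordRev n).map (fun a => ({a} : Finset ℕ)) = alphaPrime n := rfl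

lemma get_gcs_bound {n i x : ℕ} (h : (ordRev n).reverse[i]? = some x) :
    i ≤ n ∧ x = i + 1 := by
  by_cases hi : i ≤ n
  · rw [oRev_get hi] at h
    exact ⟨hi, by simpa using h.symm⟩
  · rw [oRev_get_none (by omega)] at h
    simp at h

lemma cons_rev_get_low {r : List (Finset ℕ)} {c : Finset ℕ} {j : ℕ} (hj : j < r.length) :
    (c :: r).reverse[j]? = r.reverse[j]? := by
  rw [List.reverse_cons]; exact app_get_lt _ _ (by simpa using hj)

lemma gcs_pres {n : ℕ} {p q : List (Finset ℕ)} (h : CritPair (ordRev n) p q) :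
    gcs p (alphaPrime n) = gcs q (alphaPrime n) := by
  obtain ⟨x, l, I, r, hget, hxI, hIne, hp, hq⟩ := h
  rw [ordRev_map] at hget
  set i := gcs q (alphaPrime n) with hi
  obtain ⟨hin, hx⟩ := get_gcs_bound hget
  have hQA : ∀ j < i, Agree q (alphaPrime n) j := fun j hj => gcs_agree hj
  have hQN : ¬ Agree q (alphaPrime n) i := gcs_not_agree q (alphaPrime n)
  have hpr : ∀ j < r.length, p.reverse[j]? = r.reverse[j]? := fun j hj => by
    rw [hp]; exact rev_get_low hj
  have hqr : ∀ j < r.length, q.reverse[j]? = r.reverse[j]? := fun j hj => by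
    rw [hq, rev_get_low (by simp; omega)]; exact cons_rev_get_low hj
  have hqmidI : q.reverse[r.length]? = some I := by
    rw [hq, rev_get_low (by simp)]
    rw [show (I :: r) = [] ++ I :: r from rfl, rev_get_mid]
  have hqmidx : q.reverse[r.length+1]? = some ({x} : Finset ℕ) := by
    rw [hq]; exact rev_get_mid2
  have hpmid : p.reverse[r.length]? = some (insert x I) := by
    rw [hp]; exact rev_get_mid
  rcases Nat.lt_or_ge r.length i with hri | hri
  · exfalso
    by_cases h2 : i = r.length + 1
    · exact hQN ⟨{x}, by rw [h2]; exact hqmidx, by rw [alpha_rev_get hin, hx]⟩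
    · obtain ⟨a, ha1, ha2⟩ := hQA (r.length + 1) (by omega)
      rw [hqmidx] at ha1
      rw [alpha_rev_get (by omega)] at ha2
      have : ({x} : Finset ℕ) = {r.length + 1 + 1} := by
        rw [← Option.some_inj, ha1, ha2]
      have := Finset.singleton_injective this
      omega
  · apply gcs_eq
    · intro j hj
      obtain ⟨a, ha1, ha2⟩ := hQA j hj
      exact ⟨a, by rw [hpr j (by omega), ← hqr j (by omega)]; exact ha1, ha2⟩
    · rintro ⟨a, ha1, ha2⟩
      rcases Nat.eq_or_lt_of_le hri with heq | hlt
      · rw [← heq] at hpmid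
        rw [hpmid] at ha1
        rw [alpha_rev_get hin] at ha2
        have haeq : insert x I = ({i+1} : Finset ℕ) := by
          have := ha1.trans ha2.symm; simpa using this
        obtain ⟨y, hy⟩ := hIne
        have hyx : y ∈ insert x I := Finset.mem_insert_of_mem hy
        rw [haeq] at hyx
        simp at hyx
        subst hyx
        rw [← hx] at hy
        exact hxI hy
      · exact hQN ⟨a, by rw [hqr i hlt, ← hpr i hlt]; exact ha1, ha2⟩

lemma gcs_self (p : List (Finset ℕ)) : gcs p p = p.length := by
  apply gcs_eq
  · intro j hj
    have hj' : j < p.reverse.length := by simpa using hj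
    exact ⟨p.reverse[j], List.getElem?_eq_getElem hj', List.getElem?_eq_getElem hj'⟩
  · rintro ⟨a, ha, -⟩
    rw [List.getElem?_eq_none (by simp)] at ha
    simp at ha

lemma part2 (n : ℕ) (q : List (Finset ℕ)) :
    ¬ CritPair (ordRev n) (alphaPrime n) q ∧ ¬ CritPair (ordRev n) q (alphaPrime n) := by
  constructor
  · rintro ⟨x, l, I, r, -, hxI, hIne, hpe, -⟩
    have hmem : insert x I ∈ alphaPrime n := by rw [hpe]; simp
    rw [alphaPrime, List.mem_map] at hmem
    obtain ⟨a, -, ha⟩ := hmem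
    obtain ⟨y, hy⟩ := hIne
    have hya : y ∈ insert x I := Finset.mem_insert_of_mem hy
    have hxa : x ∈ insert x I := Finset.mem_insert_self x I
    rw [← ha] at hya hxa
    simp at hya hxa
    rw [hya, ← hxa] at hy; exact hxI hy
  · rintro ⟨x, l, I, r, hget, -, -, -, -⟩
    rw [ordRev_map] at hget
    obtain ⟨hin, -⟩ := get_gcs_bound hget
    rw [gcs_self, alpha_len] at hin
    omega

lemma part3 {n : ℕ} {p q : List (Finset ℕ)}
    (hp : IsOrderedPartition (Finset.Icc 1 (n+1)) p) (h : CritPair (ordRev n) p q) :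
    LabelFacet p q ∧ q.length = p.length + 1 ∧
      IsOrderedPartition (Finset.Icc 1 (n+1)) q ∧
      gcs p (alphaPrime n) = gcs q (alphaPrime n) := by
  obtain ⟨x, l, I, r, hget, hxI, hIne, hpe, hqe⟩ := h
  obtain ⟨hne, hdisj, hun⟩ := hp
  refine ⟨Or.inl ⟨l, {x}, I, r, hqe, by rw [hpe, Finset.insert_eq]⟩,
    by rw [hpe, hqe]; simp; omega, ⟨?_, ?_, ?_⟩, gcs_pres ⟨x, l, I, r, hget, hxI, hIne, hpe, hqe⟩⟩
  · intro B hB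
    rw [hqe] at hB
    simp only [List.mem_append, List.mem_cons] at hB
    rcases hB with hB | hB | hB | hB
    · exact hne B (by rw [hpe]; simp [hB])
    · exact hB ▸ Finset.singleton_nonempty x
    · exact hB ▸ hIne
    · exact hne B (by rw [hpe]; simp [hB])
  · rw [hqe]
    rw [hpe] at hdisj
    rw [List.pairwise_append, List.pairwise_cons] at hdisj
    obtain ⟨hl, ⟨hIr, hr⟩, hlr⟩ := hdisj
    rw [List.pairwise_append, List.pairwise_cons, List.pairwise_cons]
    have hsx : ({x} : Finset ℕ) ⊆ insert x I := by simp
    have hsI : I ⊆ insert x I := Finset.subset_insert x I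
    refine ⟨hl, ⟨?_, ?_, hr⟩, ?_⟩
    · rintro b hb
      rcases List.mem_cons.1 hb with hb | hb
      · exact hb ▸ Finset.disjoint_singleton_left.2 hxI
      · exact Finset.disjoint_of_subset_left hsx (hIr b hb)
    · exact fun b hb => Finset.disjoint_of_subset_left hsI (hIr b hb)
    · intro a ha b hb
      rcases List.mem_cons.1 hb with hb | hb
      · exact hb ▸ Finset.disjoint_of_subset_right hsx (hlr a ha _ List.mem_cons_self)
      rcases List.mem_cons.1 hb with hb' | hb'
      · exact hb' ▸ Finset.disjoint_of_subset_right hsI (hlr a ha _ List.mem_cons_self)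
      · exact hlr a ha b (List.mem_cons_of_mem _ hb')
  · rw [hqe]
    rw [hpe] at hun
    rw [List.foldr_append] at hun ⊢
    simp only [List.foldr_cons] at hun ⊢
    rw [show ({x} : Finset ℕ) ∪ (I ∪ List.foldr (· ∪ ·) ∅ r) =
      insert x I ∪ List.foldr (· ∪ ·) ∅ r by rw [Finset.insert_eq, Finset.union_assoc]]
    exact hun


lemma agree_val {n : ℕ} {p : List (Finset ℕ)} {j : ℕ} (hj : j ≤ n)
    (h : Agree p (alphaPrime n) j) : p.reverse[j]? = some {j+1} := by
  obtain ⟨a, h1, h2⟩ := h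
  rw [alpha_rev_get hj] at h2
  rw [h1, h2]

lemma gcs_lt {n : ℕ} {p : List (Finset ℕ)}
    (hp : IsOrderedPartition (Finset.Icc 1 (n+1)) p) (hne : p ≠ alphaPrime n) :
    gcs p (alphaPrime n) ≤ n := by
  obtain ⟨hnon, hdisj, hun⟩ := hp
  by_contra hc
  push_neg at hc
  have hA : ∀ j ≤ n, p.reverse[j]? = some {j+1} := fun j hj =>
    agree_val hj (gcs_agree (by omega))
  have hlen : n + 1 ≤ p.length := by
    have := hA n le_rfl
    obtain ⟨hb, -⟩ := List.getElem?_eq_some_iff.1 this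
    simpa using hb
  rcases Nat.eq_or_lt_of_le hlen with hpl | hpl
  · -- p.length = n+1 : then p = alphaPrime n
    apply hne
    have : p.reverse = (alphaPrime n).reverse := by
      apply List.ext_getElem?
      intro j
      by_cases hj : j ≤ n
      · rw [hA j hj, alpha_rev_get hj]
      · rw [List.getElem?_eq_none (by simp; omega), alpha_rev_get_none (by omega)]
    simpa using congrArg List.reverse this
  · -- p.length ≥ n+2 : contradiction
    have hBs : p.reverse[n+1]? = some (p.reverse[n+1]'(by simp; omega)) :=
      List.getElem?_eq_getElem (by simp; omega)
    set B := p.reverse[n+1]'(by simp; omega) with hB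
    have hBp : B ∈ p := List.mem_reverse.1 (List.getElem_mem _)
    obtain ⟨b, hb⟩ := hnon B hBp
    have hbIcc : b ∈ Finset.Icc 1 (n+1) := by
      rw [← hun]; exact mem_foldr.2 ⟨B, hBp, hb⟩
    rw [Finset.mem_Icc] at hbIcc
    have hb1 : p.reverse[b-1]? = some {b} := by
      have := hA (b-1) (by omega)
      rwa [show b - 1 + 1 = b by omega] at this
    obtain ⟨hbl, hbe⟩ := List.getElem?_eq_some_iff.1 hb1
    have hrevdisj : p.reverse.Pairwise Disjoint :=
      List.pairwise_reverse.2 (hdisj.imp fun h => h.symm)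
    have hd := List.pairwise_iff_getElem.1 hrevdisj (b-1) (n+1) hbl (by simp; omega)
      (by omega)
    rw [hbe] at hd
    exact Finset.disjoint_left.1 hd (Finset.mem_singleton_self b) hb


lemma part1 {n : ℕ} {p : List (Finset ℕ)}
    (hp : IsOrderedPartition (Finset.Icc 1 (n+1)) p) (hne : p ≠ alphaPrime n) :
    ∃! q : List (Finset ℕ), CritPair (ordRev n) p q ∨ CritPair (ordRev n) q p := by
  obtain ⟨hnon, hdisj, hun⟩ := hp
  set i := gcs p (alphaPrime n) with hi
  have hin : i ≤ n := gcs_lt ⟨hnon, hdisj, hun⟩ hne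
  set x := i + 1 with hx
  have hgetp : (ordRev n).reverse[
      (gcs p ((ordRev n).map (fun a => ({a} : Finset ℕ))))]? = some x := by
    show (ordRev n).reverse[(gcs p (alphaPrime n))]? = some x
    rw [← hi]; exact oRev_get hin
  have hxf : x ∈ p.foldr (· ∪ ·) ∅ := by rw [hun]; simp [Finset.mem_Icc]; omega
  obtain ⟨B, hBp, hxB⟩ := mem_foldr.1 hxf
  obtain ⟨l₀, r₀, hpd⟩ := List.append_of_mem hBp
  have hpr : ∀ j < r₀.length, p.reverse[j]? = r₀.reverse[j]? := fun j hj => by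
    rw [hpd]; exact rev_get_low hj
  have hpmid : p.reverse[r₀.length]? = some B := by rw [hpd]; exact rev_get_mid
  have hPA : ∀ j < i, Agree p (alphaPrime n) j := fun j hj => gcs_agree hj
  have hPN : ¬ Agree p (alphaPrime n) i := gcs_not_agree p (alphaPrime n)
  have hri : i ≤ r₀.length := by
    by_contra hc
    push_neg at hc
    have hv := agree_val (by omega) (hPA r₀.length hc)
    rw [hpmid] at hv
    have hBeq : B = {r₀.length + 1} := by simpa using hv
    rw [hBeq] at hxB
    simp at hxB
    omega
  by_cases hBx : B = {x}
  · -- merge case: the block of x is the singleton {x}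
    have hr0 : i < r₀.length := by
      rcases Nat.eq_or_lt_of_le hri with h | h
      · exfalso
        apply hPN
        rw [← h] at hpmid
        exact ⟨{x}, by rw [hpmid, hBx], by rw [alpha_rev_get hin]⟩
      · exact h
    obtain ⟨I, r₁, hr₀⟩ : ∃ I r₁, r₀ = I :: r₁ := by
      cases r₀ with
      | nil => simp at hr0
      | cons a t => exact ⟨a, t, rfl⟩
    subst hr₀
    have hIp : I ∈ p := by rw [hpd]; simp
    have hxI : x ∉ I := by
      intro hxI
      have hdu := part_decomp_unique hdisj hpd
        (show p = (l₀ ++ [B]) ++ I :: r₁ by rw [hpd]; simp) hxB hxI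
      have hl := hdu.1
      simp at hl
    refine ⟨l₀ ++ insert x I :: r₁,
      Or.inr ⟨x, l₀, I, r₁, hgetp, hxI, hnon I hIp, rfl, by rw [hpd, hBx]⟩, ?_⟩
    rintro y (hy | hy)
    · exfalso
      obtain ⟨x', l', I', r', hget', hxI', hIne', hpe', hye'⟩ := hy
      have hgcs : gcs y (alphaPrime n) = i := by
        rw [← gcs_pres ⟨x', l', I', r', hget', hxI', hIne', hpe', hye'⟩]
      have hx' : x' = x := by
        rw [ordRev_map, hgcs, oRev_get hin] at hget'
        have := Option.some_inj.1 hget'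
        omega
      subst hx'
      have hdu := part_decomp_unique hdisj hpd hpe' hxB (Finset.mem_insert_self x I')
      have hBeq : B = insert x I' := hdu.2.1
      obtain ⟨z, hz⟩ := hIne'
      have hzB : z ∈ B := hBeq ▸ Finset.mem_insert_of_mem hz
      rw [hBx] at hzB
      simp at hzB
      subst hzB
      exact hxI' hz
    · obtain ⟨x', l', I', r', hget', hxI', hIne', hye', hpe'⟩ := hy
      have hx' : x' = x := by
        rw [ordRev_map, ← hi, oRev_get hin] at hget'
        have := Option.some_inj.1 hget'
        omega
      subst hx'
      have hdu := part_decomp_unique hdisj hpd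
        (show p = l' ++ ({x} : Finset ℕ) :: I' :: r' from hpe') hxB
        (Finset.mem_singleton_self x)
      obtain ⟨hl, -, hr⟩ := hdu
      have hI : I = I' ∧ r₁ = r' := by simpa using hr
      rw [hye', ← hl, ← hI.1, ← hI.2]
  · -- split case: the block of x is not a singleton
    set I := B.erase x with hIdef
    have hxI : x ∉ I := Finset.notMem_erase x B
    have hIne : I.Nonempty := by
      by_contra hc
      rw [Finset.not_nonempty_iff_eq_empty] at hc
      apply hBx
      apply Finset.eq_singleton_iff_unique_mem.2 ⟨hxB, fun z hz => ?_⟩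
      by_contra hzx
      have : z ∈ B.erase x := Finset.mem_erase.2 ⟨hzx, hz⟩
      rw [← hIdef, hc] at this
      simp at this
    have hBI : insert x I = B := Finset.insert_erase hxB
    have hqgcs : gcs (l₀ ++ ({x} : Finset ℕ) :: I :: r₀) (alphaPrime n) = i := by
      apply gcs_eq
      · intro j hj
        obtain ⟨a, ha1, ha2⟩ := hPA j hj
        refine ⟨a, ?_, ha2⟩
        rw [rev_get_low (by simp; omega), cons_rev_get_low (by omega), ← hpr j (by omega)]
        exact ha1
      · rintro ⟨a, ha1, ha2⟩
        rcases Nat.eq_or_lt_of_le hri with heq | hlt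
        · rw [heq, rev_get_low (by simp),
            show (I :: r₀ : List (Finset ℕ)) = [] ++ I :: r₀ from rfl, rev_get_mid] at ha1
          rw [alpha_rev_get hin] at ha2
          have hIeq : I = {i+1} := by
            rw [← Option.some_inj, ha1, ha2]
          obtain ⟨z, hz⟩ := hIne
          have hzx := (Finset.mem_erase.1 hz).1
          rw [hIeq] at hz
          simp at hz
          omega
        · apply hPN
          refine ⟨a, ?_, ha2⟩
          rw [rev_get_low (by simp; omega), cons_rev_get_low hlt] at ha1
          rw [hpr i hlt]
          exact ha1
    refine ⟨l₀ ++ ({x} : Finset ℕ) :: I :: r₀,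
      Or.inl ⟨x, l₀, I, r₀, ?_, hxI, hIne, by rw [hpd, hBI], rfl⟩, ?_⟩
    · show (ordRev n).reverse[
        (gcs (l₀ ++ ({x} : Finset ℕ) :: I :: r₀) (alphaPrime n))]? = some x
      rw [hqgcs]
      exact oRev_get hin
    rintro y (hy | hy)
    · obtain ⟨x', l', I', r', hget', hxI', hIne', hpe', hye'⟩ := hy
      have hgcs : gcs y (alphaPrime n) = i := by
        rw [← gcs_pres ⟨x', l', I', r', hget', hxI', hIne', hpe', hye'⟩]
      have hx' : x' = x := by
        rw [ordRev_map, hgcs, oRev_get hin] at hget'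
        have := Option.some_inj.1 hget'
        omega
      subst hx'
      have hdu := part_decomp_unique hdisj hpd hpe' hxB (Finset.mem_insert_self x I')
      obtain ⟨hl, hBe, hre⟩ := hdu
      have hII : I = I' := by
        rw [hIdef, hBe, Finset.erase_insert hxI']
      rw [hye', ← hl, ← hII, ← hre]
    · exfalso
      obtain ⟨x', l', I', r', hget', hxI', hIne', hye', hpe'⟩ := hy
      have hx' : x' = x := by
        rw [ordRev_map, ← hi, oRev_get hin] at hget'
        have := Option.some_inj.1 hget'
        omega
      subst hx'
      have hdu := part_decomp_unique hdisj hpd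
        (show p = l' ++ ({x} : Finset ℕ) :: I' :: r' from hpe') hxB
        (Finset.mem_singleton_self x)
      exact hBx hdu.2.1

end CP

/-- The greatest-common-suffix pairing inside a critical simplex `α = [n+1]` is a
well-defined involution on the interior simplexes of `Δ(α)` other than `α'`
(every such simplex has a unique partner and `α'` has none), it pairs simplexes of
adjacent dimensions related by the facet relation, and both operations preserve the
greatest common suffix with `λ(α')`. -/
theorem critpair_involution (n : ℕ) :
    (∀ p : List (Finset ℕ), IsOrderedPartition (Finset.Icc 1 (n+1)) p →
      p ≠ alphaPrime n →
      ∃! q : List (Finset ℕ), CritPair (ordRev n) p q ∨ CritPair (ordRev n) q p) ∧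
    (∀ q : List (Finset ℕ),
      ¬ CritPair (ordRev n) (alphaPrime n) q ∧ ¬ CritPair (ordRev n) q (alphaPrime n)) ∧
    (∀ p q : List (Finset ℕ), IsOrderedPartition (Finset.Icc 1 (n+1)) p →
      CritPair (ordRev n) p q →
      LabelFacet p q ∧ q.length = p.length + 1 ∧
        IsOrderedPartition (Finset.Icc 1 (n+1)) q ∧
        gcs p (alphaPrime n) = gcs q (alphaPrime n)) := by
  exact ⟨fun p hp hne => CP.part1 hp hne, fun q => CP.part2 n q,
    fun p q hp h => CP.part3 hp h⟩
end

section
/- The discrete vector field defined on Δ(α), α = [n+1], by the greatest-common-suffix pairing (relative to λ(α') = ({n+1},…,{1})) has no closed V-paths. -/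
namespace CritAux



/-- Greatest common prefix length. -/
def gcp : List (Finset ℕ) → List (Finset ℕ) → ℕ
  | a :: p, b :: q => if a = b then gcp p q + 1 else 0
  | _, _ => 0

lemma gcp_nil_left (Q : List (Finset ℕ)) : gcp [] Q = 0 := by cases Q <;> rfl

lemma gcp_nil_right (P : List (Finset ℕ)) : gcp P [] = 0 := by cases P <;> rfl

lemma zip_takeWhile (P Q : List (Finset ℕ)) :
    ((P.zip Q).takeWhile (fun x => x.1 == x.2)).length = gcp P Q := by
  induction P generalizing Q with
  | nil => simp [gcp_nil_left]
  | cons a P ih =>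
    cases Q with
    | nil => simp [gcp_nil_right]
    | cons b Q =>
      by_cases h : a = b
      · subst h
        have : ((a,a) :: P.zip Q).takeWhile (fun x => x.1 == x.2)
            = (a,a) :: (P.zip Q).takeWhile (fun x => x.1 == x.2) := by
          simp [List.takeWhile]
        simp only [List.zip_cons_cons, this, List.length_cons, ih, gcp, if_pos rfl]
        simp
      · have hb : (a == b) = false := by simp [h]
        have : ((a,b) :: P.zip Q).takeWhile (fun x => x.1 == x.2) = [] := by
          simp [List.takeWhile, hb]
        simp only [List.zip_cons_cons, this, List.length_nil, gcp, if_neg h]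

lemma gcs_eq_gcp (p q : List (Finset ℕ)) : gcs p q = gcp p.reverse q.reverse :=
  zip_takeWhile _ _

lemma gcp_eq_iff (P Q : List (Finset ℕ)) (s : ℕ) :
    gcp P Q = s ↔ ((∀ i < s, P[i]? = Q[i]? ∧ (P[i]?).isSome) ∧
      ¬(P[s]? = Q[s]? ∧ (P[s]?).isSome)) := by
  induction P generalizing Q s with
  | nil =>
    rw [gcp_nil_left]
    constructor
    · rintro rfl
      simp
    · rintro ⟨h1, -⟩
      by_contra hs
      have := (h1 0 (by omega)).2
      simp at this
  | cons a P ih =>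
    cases Q with
    | nil =>
      rw [gcp_nil_right]
      constructor
      · rintro rfl
        simp
      · rintro ⟨h1, -⟩
        by_contra hs
        have := (h1 0 (by omega)).1
        simp at this
    | cons b Q =>
      by_cases h : a = b
      · subst h
        cases s with
        | zero =>
          constructor
          · intro h0
            exfalso
            simp [gcp] at h0
          · rintro ⟨-, h2⟩
            exfalso
            exact h2 ⟨rfl, rfl⟩
        | succ t =>
          have hg : gcp (a :: P) (a :: Q) = gcp P Q + 1 := by simp [gcp]
          rw [hg]
          constructor
          · intro h0
            obtain ⟨h1, h2⟩ := (ih Q t).mp (by omega)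
            refine ⟨?_, ?_⟩
            · intro i hi
              cases i with
              | zero => exact ⟨rfl, rfl⟩
              | succ j => simpa using h1 j (by omega)
            · simpa using h2
          · rintro ⟨h1, h2⟩
            have : gcp P Q = t :=
              (ih Q t).mpr ⟨fun i hi => by simpa using h1 (i+1) (by omega), by simpa using h2⟩
            omega
      · have h0 : gcp (a :: P) (b :: Q) = 0 := by simp [gcp, h]
        rw [h0]
        constructor
        · rintro rfl
          refine ⟨fun i hi => absurd hi (by omega), ?_⟩
          rintro ⟨he, -⟩
          exact h (by simpa using he)
        · rintro ⟨h1, -⟩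
          by_contra hs
          have := (h1 0 (by omega)).1
          exact h (by simpa using this)


def Rl (n : ℕ) : List (Finset ℕ) := (List.range (n+1)).map (fun i => ({i+1} : Finset ℕ))

lemma Rl_get? {n i : ℕ} (h : i ≤ n) : (Rl n)[i]? = some {i+1} := by
  rw [Rl, List.getElem?_map, List.getElem?_range (show i < n+1 by omega)]
  rfl

lemma Rl_length (n : ℕ) : (Rl n).length = n + 1 := by simp [Rl]

lemma ordRev_succ (n : ℕ) : ordRev (n+1) = (n+2) :: ordRev n := by
  simp only [ordRev, List.range_succ_eq_map, List.map_cons, List.map_map]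
  congr 1
  congr 1
  apply List.map_congr_left
  intro a _
  simp only [Function.comp]
  omega

lemma ordRev_reverse (n : ℕ) : (ordRev n).reverse = (List.range (n+1)).map (· + 1) := by
  induction n with
  | zero => rfl
  | succ m ih =>
    rw [ordRev_succ, List.reverse_cons, ih]
    simp [List.range_succ]

lemma ordRev_rev_get? {n s x : ℕ} (h : (ordRev n).reverse[s]? = some x) :
    s ≤ n ∧ x = s + 1 := by
  rw [ordRev_reverse] at h
  have hlen : s < n + 1 := by
    by_contra h'
    rw [List.getElem?_eq_none_iff.mpr (by simp; omega)] at h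
    exact Option.some_ne_none _ h.symm
  rw [List.getElem?_map, List.getElem?_range hlen] at h
  simp at h
  exact ⟨by omega, by omega⟩

lemma rev_decomp (l : List (Finset ℕ)) (B : Finset ℕ) (r : List (Finset ℕ)) :
    (l ++ B :: r).reverse = r.reverse ++ B :: l.reverse := by simp

lemma rev_get?_low {l r : List (Finset ℕ)} (B : Finset ℕ) {i : ℕ} (h : i < r.length) :
    (l ++ B :: r).reverse[i]? = r.reverse[i]? := by
  rw [rev_decomp, List.getElem?_append_left (by simpa using h)]

lemma rev_get?_mid (l : List (Finset ℕ)) (B : Finset ℕ) (r : List (Finset ℕ)) :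
    (l ++ B :: r).reverse[r.length]? = some B := by
  rw [rev_decomp, List.getElem?_append_right (by simp)]
  simp


lemma Mrev (n : ℕ) : ((ordRev n).map (fun a => ({a} : Finset ℕ))).reverse = Rl n := by
  rw [← List.map_reverse, ordRev_reverse, List.map_map]
  rfl

lemma gcpR_intro {n s : ℕ} {P : List (Finset ℕ)} (hs : s ≤ n)
    (h1 : ∀ i < s, P[i]? = some {i+1}) (h2 : P[s]? ≠ some {s+1}) :
    gcp P (Rl n) = s := by
  rw [gcp_eq_iff]
  refine ⟨fun i hi => ?_, ?_⟩
  · rw [h1 i hi, Rl_get? (by omega)]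
    exact ⟨rfl, rfl⟩
  · rintro ⟨he, -⟩
    rw [Rl_get? hs] at he
    exact h2 he

lemma gcpR_elim {n s : ℕ} {P : List (Finset ℕ)} (h : gcp P (Rl n) = s) :
    (∀ i < s, i ≤ n ∧ P[i]? = some {i+1}) ∧
      (∀ B, s ≤ n → P[s]? = some B → B ≠ {s+1}) := by
  rw [gcp_eq_iff] at h
  obtain ⟨h1, h2⟩ := h
  constructor
  · intro i hi
    obtain ⟨he, hsome⟩ := h1 i hi
    have hne : (Rl n)[i]? ≠ none := by
      rw [← he]
      intro hc
      rw [hc] at hsome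
      simp at hsome
    have hin : i < n + 1 := by
      by_contra h'
      exact hne (List.getElem?_eq_none_iff.mpr (by rw [Rl_length]; omega))
    exact ⟨by omega, by rw [he, Rl_get? (by omega)]⟩
  · intro B hsn hB heq
    exact h2 ⟨by rw [hB, Rl_get? hsn, heq], by rw [hB]; rfl⟩

lemma union_ne_singleton {I J : Finset ℕ} (hI : I.Nonempty) (hJ : J.Nonempty)
    (hd : Disjoint I J) (a : ℕ) : I ∪ J ≠ {a} := by
  intro h
  obtain ⟨i, hi⟩ := hI
  obtain ⟨j, hj⟩ := hJ
  have hi' : i ∈ I ∪ J := Finset.mem_union_left _ hi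
  have hj' : j ∈ I ∪ J := Finset.mem_union_right _ hj
  rw [h, Finset.mem_singleton] at hi' hj'
  subst hi'
  subst hj'
  exact (Finset.disjoint_left.mp hd hi) hj

lemma insert_ne_singleton {I : Finset ℕ} {x a : ℕ} (hI : I.Nonempty) (hx : x ∉ I) :
    insert x I ≠ {a} := by
  intro h
  obtain ⟨y, hy⟩ := hI
  have hy' : y ∈ insert x I := Finset.mem_insert_of_mem hy
  have hx' : x ∈ insert x I := Finset.mem_insert_self _ _
  rw [h, Finset.mem_singleton] at hy' hx'
  subst hy'
  subst hx'
  exact hx hy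

def bIdx (x : ℕ) (p : List (Finset ℕ)) : ℕ := p.reverse.findIdx (fun I => decide (x ∈ I))

lemma findIdx_aux {x : ℕ} (u : List (Finset ℕ)) (B : Finset ℕ) (v : List (Finset ℕ))
    (hu : ∀ J ∈ u, x ∉ J) (hB : x ∈ B) :
    (u ++ B :: v).findIdx (fun I => decide (x ∈ I)) = u.length := by
  induction u with
  | nil => simp [List.findIdx_cons, hB]
  | cons J u ih =>
    have h1 : x ∉ J := hu J (by simp)
    simp only [List.cons_append, List.findIdx_cons, h1, decide_false, cond_false,
      List.length_cons]
    rw [ih (fun K hK => hu K (by simp [hK]))]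

lemma bIdx_eq {x : ℕ} {p l r : List (Finset ℕ)} {B : Finset ℕ}
    (hd : p.Pairwise Disjoint) (hp : p = l ++ B :: r) (hB : x ∈ B) :
    bIdx x p = r.length := by
  subst hp
  have hpair : (B :: r).Pairwise Disjoint :=
    List.Pairwise.sublist (List.sublist_append_right l (B :: r)) hd
  have hr : ∀ J ∈ r, x ∉ J := fun J hJ hxJ =>
    (Finset.disjoint_left.mp ((List.pairwise_cons.mp hpair).1 J hJ) hB) hxJ
  rw [bIdx, rev_decomp]
  rw [findIdx_aux r.reverse B l.reverse (fun J hJ => hr J (List.mem_reverse.mp hJ)) hB]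
  simp

lemma block_unique {p : List (Finset ℕ)} (hd : p.Pairwise Disjoint) {B1 B2 : Finset ℕ}
    {x : ℕ} (h1 : B1 ∈ p) (h2 : B2 ∈ p) (hx1 : x ∈ B1) (hx2 : x ∈ B2) : B1 = B2 := by
  by_contra hne
  exact (Finset.disjoint_left.mp
    (haveI : Std.Symm (Disjoint : Finset ℕ → Finset ℕ → Prop) := ⟨fun _ _ h => h.symm⟩;
      hd.forall h1 h2 hne) hx1) hx2

lemma mem_foldr {a : ℕ} (l : List (Finset ℕ)) :
    a ∈ l.foldr (· ∪ ·) ∅ ↔ ∃ I ∈ l, a ∈ I := by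
  induction l with
  | nil => simp
  | cons B l ih => simp [ih]

lemma facet_merge {S : Finset ℕ} {p q : List (Finset ℕ)}
    (hp : IsOrderedPartition S p) (hq : IsOrderedPartition S q) (h : LabelFacet p q) :
    ∃ l I J r, q = l ++ I :: J :: r ∧ p = l ++ (I ∪ J) :: r := by
  rcases h with h | ⟨B, hB⟩
  · exact h
  · exfalso
    have hBq : B ∈ q := by rw [hB]; simp
    obtain ⟨b, hb⟩ := hq.1 B hBq
    have hbS : b ∈ S := by
      rw [← hq.2.2]
      exact (mem_foldr q).mpr ⟨B, hBq, hb⟩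
    have hbp : ∃ I ∈ p, b ∈ I := by
      rw [← mem_foldr p, hp.2.2]
      exact hbS
    obtain ⟨I, hIp, hbI⟩ := hbp
    have hdisj : Disjoint I B := by
      have := hq.2.1
      rw [hB, List.pairwise_append] at this
      exact this.2.2 I hIp B (by simp)
    exact (Finset.disjoint_left.mp hdisj hbI) hb

/-- Two suffix decompositions of the same list, ordered by length. -/
lemma suffix_suffix {l1 t1 l2 t2 : List (Finset ℕ)} (h : l1 ++ t1 = l2 ++ t2)
    (hle : t1.length ≤ t2.length) : ∃ m, l1 = l2 ++ m ∧ t2 = m ++ t1 := by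
  have hlen : l2.length ≤ l1.length := by
    have := congrArg List.length h
    simp only [List.length_append] at this
    omega
  have h' : l1.take l2.length ++ (l1.drop l2.length ++ t1) = l2 ++ t2 := by
    rw [← List.append_assoc, List.take_append_drop]
    exact h
  have h2 := List.append_inj h' (by rw [List.length_take]; omega)
  refine ⟨l1.drop l2.length, ?_, h2.2.symm⟩
  conv_lhs => rw [← List.take_append_drop l2.length l1]
  rw [h2.1]


lemma critpair_spec {n : ℕ} {p q : List (Finset ℕ)} (h : CritPair (ordRev n) p q) :
    ∃ s l I r, gcp q.reverse (Rl n) = s ∧ gcp p.reverse (Rl n) = s ∧ s ≤ n ∧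
      (s+1) ∉ I ∧ I.Nonempty ∧ p = l ++ insert (s+1) I :: r ∧ q = l ++ {s+1} :: I :: r ∧
      s ≤ r.length := by
  obtain ⟨x, l, I, r, hget, hxI, hIne, hp, hq⟩ := h
  have hgcs : gcs q ((ordRev n).map (fun a => ({a} : Finset ℕ)))
      = gcp q.reverse (Rl n) := by
    rw [gcs_eq_gcp, Mrev]
  set s := gcp q.reverse (Rl n) with hs
  rw [hgcs] at hget
  obtain ⟨hsn, hx⟩ := ordRev_rev_get? hget
  subst hx
  obtain ⟨hq1, hq2⟩ := gcpR_elim hs.symm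
  have hq' : q = (l ++ [{s+1}]) ++ I :: r := by rw [hq]; simp
  have hqr : ∀ i < r.length, q.reverse[i]? = r.reverse[i]? := by
    intro i hi
    rw [hq']
    exact rev_get?_low _ hi
  have hxpos : q.reverse[(r.length + 1)]? = some {s+1} := by
    have := rev_get?_mid l {s+1} (I :: r)
    rw [← hq] at this
    simpa using this
  have hrs : s ≤ r.length := by
    by_contra hlt
    push_neg at hlt
    rcases Nat.lt_or_ge (r.length+1) s with hlt2 | hge2
    · have h2 := (hq1 _ hlt2).2
      rw [hxpos] at h2
      have h3 : s + 1 = r.length + 1 + 1 := Finset.singleton_injective (Option.some.inj h2)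
      omega
    · have heq : r.length + 1 = s := by omega
      rw [heq] at hxpos
      exact hq2 _ hsn hxpos rfl
  have hps : gcp p.reverse (Rl n) = s := by
    apply gcpR_intro hsn
    · intro i hi
      have h1 : p.reverse[i]? = r.reverse[i]? := by
        rw [hp]; exact rev_get?_low _ (by omega)
      rw [h1, ← hqr i (by omega)]
      exact (hq1 i hi).2
    · rcases eq_or_lt_of_le hrs with heq | hlt
      · have hmid : p.reverse[s]? = some (insert (s+1) I) := by
          rw [hp, heq]
          exact rev_get?_mid _ _ _
        rw [hmid]
        intro hc
        exact insert_ne_singleton hIne hxI (Option.some.inj hc)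
      · have h1 : p.reverse[s]? = r.reverse[s]? := by
          rw [hp]; exact rev_get?_low _ hlt
        rcases hB : r.reverse[s]? with _ | B
        · rw [h1, hB]; intro hc; exact Option.some_ne_none _ hc.symm
        · rw [h1, hB]
          intro hc
          exact hq2 B hsn ((hqr s hlt).trans hB) (Option.some.inj hc)
  exact ⟨s, l, I, r, rfl, hps, hsn, hxI, hIne, hp, hq, hrs⟩

lemma step {n : ℕ} {p q p' q'' : List (Finset ℕ)} {S : Finset ℕ}
    (hp : IsOrderedPartition S p) (hq : IsOrderedPartition S q)
    (hp' : IsOrderedPartition S p')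
    (h1 : CritPair (ordRev n) p q) (h2 : LabelFacet p' q) (hne : p' ≠ p)
    (h3 : CritPair (ordRev n) p' q'') :
    gcp p'.reverse (Rl n) < gcp p.reverse (Rl n) ∨
      (gcp p'.reverse (Rl n) = gcp p.reverse (Rl n) ∧
        bIdx (gcp p.reverse (Rl n) + 1) p < bIdx (gcp p.reverse (Rl n) + 1) p') := by
  obtain ⟨s, l, I, r, hqs, hps, hsn, hxI, hIne, hp_eq, hq_eq, hrs⟩ := critpair_spec h1
  rw [hps]
  obtain ⟨l2, I2, J2, r2, hq2_eq, hp'_eq⟩ := facet_merge hp' hq h2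
  have hI2 : I2.Nonempty := hq.1 I2 (by rw [hq2_eq]; simp)
  have hJ2 : J2.Nonempty := hq.1 J2 (by rw [hq2_eq]; simp)
  have hI2J2 : Disjoint I2 J2 := by
    have hw := hq.2.1
    rw [hq2_eq] at hw
    have hpair : (I2 :: J2 :: r2).Pairwise Disjoint :=
      List.Pairwise.sublist (List.sublist_append_right _ _) hw
    exact (List.pairwise_cons.mp hpair).1 J2 (by simp)
  have hqelim := gcpR_elim hqs
  have hq'dec : q = (l2 ++ [I2]) ++ J2 :: r2 := by rw [hq2_eq]; simp
  have hqr2 : ∀ i < r2.length, q.reverse[i]? = r2.reverse[i]? := fun i hi => by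
    rw [hq'dec]; exact rev_get?_low _ hi
  have hp'r2 : ∀ i < r2.length, p'.reverse[i]? = r2.reverse[i]? := fun i hi => by
    rw [hp'_eq]; exact rev_get?_low _ hi
  by_cases hcase : r2.length < s
  · left
    have hj : gcp p'.reverse (Rl n) = r2.length := by
      apply gcpR_intro (by omega)
      · intro i hi
        rw [hp'r2 i hi, ← hqr2 i hi]
        exact (hqelim.1 i (by omega)).2
      · have hmid : p'.reverse[r2.length]? = some (I2 ∪ J2) := by
          rw [hp'_eq]; exact rev_get?_mid _ _ _
        rw [hmid]
        intro hc
        exact union_ne_singleton hI2 hJ2 hI2J2 _ (Option.some.inj hc)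
    omega
  · push_neg at hcase
    have hties : gcp p'.reverse (Rl n) = s := by
      apply gcpR_intro hsn
      · intro i hi
        rw [hp'r2 i (by omega), ← hqr2 i (by omega)]
        exact (hqelim.1 i hi).2
      · rcases eq_or_lt_of_le hcase with heq | hlt
        · have hmid : p'.reverse[s]? = some (I2 ∪ J2) := by
            rw [hp'_eq, heq]; exact rev_get?_mid _ _ _
          rw [hmid]
          intro hc
          exact union_ne_singleton hI2 hJ2 hI2J2 _ (Option.some.inj hc)
        · rcases hB : r2.reverse[s]? with _ | B
          · rw [hp'r2 s hlt, hB]; intro hc; exact Option.some_ne_none _ hc.symm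
          · rw [hp'r2 s hlt, hB]
            intro hc
            exact hqelim.2 B hsn ((hqr2 s hlt).trans hB) (Option.some.inj hc)
    rcases lt_trichotomy r2.length r.length with hjr | hjr | hjr
    · -- merge inside `I :: r`: the singleton `{s+1}` survives in `p'`, contradicting
      -- the next pair step
      exfalso
      obtain ⟨m, hl2, hIr⟩ := suffix_suffix
        (show l2 ++ (I2 :: J2 :: r2) = (l ++ [{s+1}]) ++ (I :: r) by
          simp only [List.append_assoc, List.cons_append, List.nil_append]
          exact hq2_eq.symm.trans hq_eq)
        (by simp; omega)
      have hmem : ({s+1} : Finset ℕ) ∈ p' := by rw [hp'_eq, hl2]; simp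
      obtain ⟨s', l5, I5, r5, hq''s, hp's, hs'n, hxI5, hI5ne, hp'5, hq''5, hr5⟩ :=
        critpair_spec h3
      have hss' : s' = s := by rw [hties] at hp's; omega
      have hmem2 : insert (s'+1) I5 ∈ p' := by rw [hp'5]; simp
      have hbeq : ({s+1} : Finset ℕ) = insert (s'+1) I5 :=
        block_unique hp'.2.1 hmem hmem2 (Finset.mem_singleton_self _)
          (by rw [hss']; exact Finset.mem_insert_self _ _)
      obtain ⟨y, hy⟩ := hI5ne
      have hy' : y ∈ insert (s'+1) I5 := Finset.mem_insert_of_mem hy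
      rw [← hbeq, Finset.mem_singleton] at hy'
      subst hy'
      rw [hss'] at hxI5
      exact hxI5 hy
    · -- the merge undoes the pairing: `p' = p`
      exfalso
      have h4 : (l2 ++ [I2, J2]) ++ r2 = (l ++ [{s+1}, I]) ++ r := by
        simp only [List.append_assoc, List.cons_append, List.nil_append]
        exact hq2_eq.symm.trans hq_eq
      obtain ⟨hfront, hr2r⟩ := List.append_inj' h4 hjr
      obtain ⟨hl2l, hIJ⟩ := List.append_inj' hfront (by simp)
      have hI2' : I2 = {s+1} ∧ J2 = I := by
        constructor
        · exact (List.cons.inj hIJ).1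
        · exact (List.cons.inj (List.cons.inj hIJ).2).1
      apply hne
      rw [hp'_eq, hp_eq, hl2l, hr2r, hI2'.1, hI2'.2, ← Finset.insert_eq]
    · -- the merge happens at or to the left of `{s+1}`: its block moves left
      right
      refine ⟨hties, ?_⟩
      have hbp : bIdx (s+1) p = r.length :=
        bIdx_eq hp.2.1 hp_eq (Finset.mem_insert_self _ _)
      have hbp' : bIdx (s+1) p' = r.length + 1 := by
        rcases eq_or_lt_of_le (show r.length + 1 ≤ r2.length by omega) with heq | hlt
        · -- `J2 = {s+1}` is merged with `I2` on its left
          have h4 : (l2 ++ [I2]) ++ (J2 :: r2) = l ++ ({s+1} :: I :: r) := by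
            simp only [List.append_assoc, List.cons_append, List.nil_append]
            exact hq2_eq.symm.trans hq_eq
          obtain ⟨hfront, htail⟩ := List.append_inj' h4 (by simp; omega)
          have hJ2' : J2 = {s+1} := (List.cons.inj htail).1
          have hr2' : r2 = I :: r := (List.cons.inj htail).2
          have hdec : p' = l2 ++ (I2 ∪ J2) :: (I :: r) := by rw [hp'_eq, hr2']
          have := bIdx_eq (x := s+1) hp'.2.1 hdec
            (by rw [hJ2']; exact Finset.mem_union_right _ (Finset.mem_singleton_self _))
          simpa using this
        · -- the merge is strictly to the left of the block `{s+1}`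
          obtain ⟨m, hlm, htm⟩ := suffix_suffix
            (show l ++ ({s+1} :: I :: r) = l2 ++ (I2 :: J2 :: r2) from
              hq_eq.symm.trans hq2_eq)
            (by simp; omega)
          match m, htm with
          | [], htm =>
            exfalso
            have := congrArg List.length htm
            simp at this
            omega
          | [a], htm =>
            exfalso
            have := congrArg List.length htm
            simp at this
            omega
          | a :: b :: m2, htm =>
            have hr2' : r2 = m2 ++ {s+1} :: I :: r := by
              have := (List.cons.inj (List.cons.inj htm).2).2
              simpa using this
            have hdec : p' = (l2 ++ (I2 ∪ J2) :: m2) ++ ({s+1} : Finset ℕ) :: (I :: r) := by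
              rw [hp'_eq, hr2']
              simp
            have := bIdx_eq (x := s+1) hp'.2.1 hdec (Finset.mem_singleton_self _)
            simpa using this
      rw [hbp, hbp']
      omega

end CritAux

/-- The discrete vector field on `Δ(α)`, `α = [n+1]`, given by the
greatest-common-suffix pairing relative to `λ(α') = ({n+1},…,{1})`, has no closed
V-paths. -/
theorem critpair_no_closed_path (n : ℕ) :
    ¬ ∃ P : VPath LabelFacet (CritPair (ordRev n)),
      (∀ i ≤ P.len, IsOrderedPartition (Finset.Icc 1 (n+1)) (P.upper i) ∧
        IsOrderedPartition (Finset.Icc 1 (n+1)) (P.lower i)) ∧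
      0 < P.len ∧ P.lower P.len = P.lower 0 := by
  rintro ⟨P, hpart, hlen, hclosed⟩
  have key : ∀ i < P.len,
      CritAux.gcp (P.lower (i+1)).reverse (CritAux.Rl n)
          < CritAux.gcp (P.lower i).reverse (CritAux.Rl n) ∨
        (CritAux.gcp (P.lower (i+1)).reverse (CritAux.Rl n)
            = CritAux.gcp (P.lower i).reverse (CritAux.Rl n) ∧
          CritAux.bIdx (CritAux.gcp (P.lower i).reverse (CritAux.Rl n) + 1) (P.lower i)
            < CritAux.bIdx (CritAux.gcp (P.lower i).reverse (CritAux.Rl n) + 1)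
                (P.lower (i+1))) := by
    intro i hi
    have hq'' : ∃ q'', CritPair (ordRev n) (P.lower (i+1)) q'' := by
      rcases Nat.lt_or_ge (i+1) P.len with h | h
      · exact ⟨P.upper (i+2), P.pair_step (i+1) h⟩
      · have hi1 : i + 1 = P.len := by omega
        refine ⟨P.upper 1, ?_⟩
        rw [hi1, hclosed]
        exact P.pair_step 0 hlen
    obtain ⟨q'', h3⟩ := hq''
    exact CritAux.step (hpart i (by omega)).2 (hpart (i+1) (by omega)).1
      (hpart (i+1) (by omega)).2 (P.pair_step i hi)
      (P.face_step (i+1) (by omega)) (Ne.symm (P.lower_ne i hi)) h3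
  have mono : ∀ i < P.len,
      CritAux.gcp (P.lower (i+1)).reverse (CritAux.Rl n)
        ≤ CritAux.gcp (P.lower i).reverse (CritAux.Rl n) := by
    intro i hi
    rcases key i hi with h | h
    · omega
    · omega
  have upper_bound : ∀ i, i ≤ P.len →
      CritAux.gcp (P.lower i).reverse (CritAux.Rl n)
        ≤ CritAux.gcp (P.lower 0).reverse (CritAux.Rl n) := by
    intro i
    induction i with
    | zero => intro _; exact le_refl _
    | succ k ih =>
      intro hk
      exact le_trans (mono k (by omega)) (ih (by omega))
  have lower_bound : ∀ k i, i + k ≤ P.len →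
      CritAux.gcp (P.lower (i+k)).reverse (CritAux.Rl n)
        ≤ CritAux.gcp (P.lower i).reverse (CritAux.Rl n) := by
    intro k
    induction k with
    | zero => intro i _; exact le_refl _
    | succ m ih =>
      intro i hik
      have h1 : CritAux.gcp (P.lower ((i+m)+1)).reverse (CritAux.Rl n)
          ≤ CritAux.gcp (P.lower (i+m)).reverse (CritAux.Rl n) :=
        mono (i+m) (by omega)
      have h2 := ih i (by omega)
      have h3 : i + (m+1) = (i+m)+1 := by omega
      rw [h3]
      omega
  have hGeq : ∀ i, i ≤ P.len →
      CritAux.gcp (P.lower i).reverse (CritAux.Rl n)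
        = CritAux.gcp (P.lower 0).reverse (CritAux.Rl n) := by
    intro i hi
    have h1 := upper_bound i hi
    have h2 := lower_bound (P.len - i) i (by omega)
    rw [show i + (P.len - i) = P.len by omega, hclosed] at h2
    omega
  have dstrict : ∀ i < P.len,
      CritAux.bIdx (CritAux.gcp (P.lower 0).reverse (CritAux.Rl n) + 1) (P.lower i)
        < CritAux.bIdx (CritAux.gcp (P.lower 0).reverse (CritAux.Rl n) + 1)
            (P.lower (i+1)) := by
    intro i hi
    rcases key i hi with h | h
    · exfalso
      have e1 := hGeq i (by omega)
      have e2 := hGeq (i+1) (by omega)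
      omega
    · rw [hGeq i (by omega)] at h
      exact h.2
  have dge : ∀ i, i ≤ P.len →
      CritAux.bIdx (CritAux.gcp (P.lower 0).reverse (CritAux.Rl n) + 1) (P.lower 0) + i
        ≤ CritAux.bIdx (CritAux.gcp (P.lower 0).reverse (CritAux.Rl n) + 1)
            (P.lower i) := by
    intro i
    induction i with
    | zero => intro _; omega
    | succ k ih =>
      intro hk
      have h1 := dstrict k (by omega)
      have h2 := ih (by omega)
      omega
  have hfin := dge P.len (le_refl _)
  rw [hclosed] at hfin
  omega
end
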